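/- Let k ∈ ℕ and let u be an infinite word over a finite alphabet Σ with stationary type τ ∈ Types_k. Then tp_k(u) = τ, i.e. u satisfies exactly the prefFO sentences of quantifier depth at most k belonging to τ. -/

import Mathlib

set_option maxHeartbeats 1000000

namespace PrefSynth

/-! ### Possibly infinite words -/

/-- A (finite or infinite) word over alphabet `A`: positions carrying `some` letter. -/
abbrev Word (A : Type) : Type := ℕ → Option A

/-- `m` is a position of the word `w`. -/
def Word.pos {A : Type} (w : Word A) (m : ℕ) : Prop := w m ≠ none

/-- A genuine word: its domain is downward closed. -/
def Word.Closed {A : Type} (w : Word A) : Prop :=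
  ∀ i j : ℕ, i ≤ j → w j ≠ none → w i ≠ none

/-- The finite word given by a list. -/
def Word.ofList {A : Type} (l : List A) : Word A := fun i => l[i]?

/-- The infinite word given by a function. -/
def Word.ofFun {A : Type} (u : ℕ → A) : Word A := fun i => some (u i)

/-- The prefix of a word consisting of its first `n` positions; `Word.take w (m+1)`
is `w[0…m]`. -/
def Word.take {A : Type} (w : Word A) (n : ℕ) : Word A :=
  fun i => if i < n then w i else none

/-- `u` is a prefix of `v`. -/
def Word.IsPrefix {A : Type} (u v : Word A) : Prop :=
  ∀ i, u i ≠ none → v i = u i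

/-! ### Prefix first-order logic on words

Formulas in context `n`: the free variables are `Fin n`; when `n ≥ 1`, the variable
`0` is the bounding variable `x̄`, all other variables are prefix variables, and
every quantifier is of the form `∃ x < x̄` (new variables are appended at the end,
i.e. interpreted through `Fin.snoc`). -/

inductive PFm (A : Type) : ℕ → Type where
  | eq {n} : Fin n → Fin n → PFm A n
  | lt {n} : Fin n → Fin n → PFm A n
  | letter {n} : A → Fin n → PFm A n
  | and {n} : PFm A n → PFm A n → PFm A n
  | not {n} : PFm A n → PFm A n
  | exlt {n} : PFm A (n + 2) → PFm A (n + 1)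

/-- Quantifier depth. -/
def PFm.depth {A : Type} : {n : ℕ} → PFm A n → ℕ
  | _, .eq _ _ => 0
  | _, .lt _ _ => 0
  | _, .letter _ _ => 0
  | _, .and φ ψ => max φ.depth ψ.depth
  | _, .not φ => φ.depth
  | _, .exlt φ => φ.depth + 1

/-- Satisfaction of a prefFO formula in a word, under an assignment of the
free variables to positions. -/
def PFm.Sat {A : Type} (w : Word A) : {n : ℕ} → PFm A n → (Fin n → ℕ) → Prop
  | _, .eq i j, ρ => ρ i = ρ j
  | _, .lt i j, ρ => ρ i < ρ j
  | _, .letter a i, ρ => w (ρ i) = some a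
  | _, .and φ ψ, ρ => PFm.Sat w φ ρ ∧ PFm.Sat w ψ ρ
  | _, .not φ, ρ => ¬ PFm.Sat w φ ρ
  | _, .exlt φ, ρ => ∃ m : ℕ, Word.pos w m ∧ m < ρ 0 ∧ PFm.Sat w φ (Fin.snoc ρ m)

/-- prefFO sentences: start by quantifying the bounding variable, and are closed
under boolean combinations. -/
inductive PSen (A : Type) : Type where
  | exB : PFm A 1 → PSen A
  | and : PSen A → PSen A → PSen A
  | not : PSen A → PSen A

/-- Quantifier depth of a sentence. -/
def PSen.depth {A : Type} : PSen A → ℕ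
  | .exB φ => φ.depth + 1
  | .and s t => max s.depth t.depth
  | .not s => s.depth

/-- Satisfaction of a prefFO sentence in a word. -/
def PSen.Sat {A : Type} (w : Word A) : PSen A → Prop
  | .exB φ => ∃ m : ℕ, Word.pos w m ∧ PFm.Sat w φ (fun _ => m)
  | .and s t => PSen.Sat w s ∧ PSen.Sat w t
  | .not s => ¬ PSen.Sat w s

/-- The prefFO `k`-type of a word: the set of prefFO sentences of quantifier
depth at most `k` it satisfies. -/
def tp {A : Type} (k : ℕ) (w : Word A) : Set (PSen A) :=
  {s | PSen.depth s ≤ k ∧ PSen.Sat w s}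

/-- `Types_k`: the set of prefFO `k`-types of finite words over `A`. -/
def WTypes (A : Type) (k : ℕ) : Set (Set (PSen A)) :=
  {T | ∃ l : List A, T = tp k (Word.ofList l)}

/-- The relation `⪯` on types: `τ ⪯ τ'` iff some finite word of type `τ` has an
extension of type `τ'`. -/
def typeLe {A : Type} (k : ℕ) (τ τ' : Set (PSen A)) : Prop :=
  ∃ u v : List A, tp k (Word.ofList u) = τ ∧ tp k (Word.ofList (u ++ v)) = τ'

/-- Two words agree on all prefFO sentences of quantifier depth at most `k`. -/
def prefEquiv {A : Type} (k : ℕ) (w w' : Word A) : Prop :=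
  ∀ s : PSen A, PSen.depth s ≤ k → (PSen.Sat w s ↔ PSen.Sat w' s)

/-! ### Full first-order logic on words -/

inductive FOFm (A : Type) : ℕ → Type where
  | eq {n} : Fin n → Fin n → FOFm A n
  | lt {n} : Fin n → Fin n → FOFm A n
  | letter {n} : A → Fin n → FOFm A n
  | and {n} : FOFm A n → FOFm A n → FOFm A n
  | not {n} : FOFm A n → FOFm A n
  | ex {n} : FOFm A (n + 1) → FOFm A n

def FOFm.depth {A : Type} : {n : ℕ} → FOFm A n → ℕ
  | _, .eq _ _ => 0
  | _, .lt _ _ => 0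
  | _, .letter _ _ => 0
  | _, .and φ ψ => max φ.depth ψ.depth
  | _, .not φ => φ.depth
  | _, .ex φ => φ.depth + 1

def FOFm.Sat {A : Type} (w : Word A) : {n : ℕ} → FOFm A n → (Fin n → ℕ) → Prop
  | _, .eq i j, ρ => ρ i = ρ j
  | _, .lt i j, ρ => ρ i < ρ j
  | _, .letter a i, ρ => w (ρ i) = some a
  | _, .and φ ψ, ρ => FOFm.Sat w φ ρ ∧ FOFm.Sat w ψ ρ
  | _, .not φ, ρ => ¬ FOFm.Sat w φ ρ
  | _, .ex φ, ρ => ∃ m : ℕ, Word.pos w m ∧ FOFm.Sat w φ (Fin.snoc ρ m)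

/-- Two words agree on all FO sentences of quantifier depth at most `k`. -/
def foEquiv {A : Type} (k : ℕ) (w w' : Word A) : Prop :=
  ∀ s : FOFm A 0, FOFm.depth s ≤ k →
    (FOFm.Sat w s Fin.elim0 ↔ FOFm.Sat w' s Fin.elim0)

/-! ### The prefix Ehrenfeucht–Fraïssé game on words

After the first (bounding) round, pebbles are kept as matched pairs of
positions: `(m, m')` with `m` in the first word and `m'` in the second. -/

/-- The agreement condition: the correspondence between pebbled positions
preserves equality, the order `<` and the letters. -/
def AgreeW {A : Type} (u v : Word A) (L : List (ℕ × ℕ)) : Prop :=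
  ∀ p ∈ L, ∀ q ∈ L,
    ((p.1 = q.1) ↔ (p.2 = q.2)) ∧ ((p.1 < q.1) ↔ (p.2 < q.2)) ∧
    (∀ a : A, u p.1 = some a ↔ v p.2 = some a)

/-- `DupWinW u v b b' r L`: with bounding pebbles placed on `b` (in `u`) and `b'`
(in `v`), and prefix pebbles `L` already placed, Duplicator wins the game with `r`
remaining rounds. -/
def DupWinW {A : Type} (u v : Word A) (b b' : ℕ) : ℕ → List (ℕ × ℕ) → Prop
  | 0, L => AgreeW u v ((b, b') :: L)
  | r + 1, L => AgreeW u v ((b, b') :: L) ∧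
      (∀ m, Word.pos u m → m < b →
        ∃ m', Word.pos v m' ∧ m' < b' ∧ DupWinW u v b b' r ((m, m') :: L)) ∧
      (∀ m', Word.pos v m' → m' < b' →
        ∃ m, Word.pos u m ∧ m < b ∧ DupWinW u v b b' r ((m, m') :: L))

/-! ### Data words -/

/-- A move of a data word: a System action together with a System process, or an
Environment action together with an Environment process. `A`, `B` are the System
and Environment alphabets; `P`, `Q` the System and Environment process sets. -/
abbrev DMove (A B P Q : Type) : Type := (A × P) ⊕ (B × Q)

/-- The process of a move. -/
def dproc {A B P Q : Type} : DMove A B P Q → P ⊕ Q :=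
  Sum.elim (fun ap => Sum.inl ap.2) (fun bq => Sum.inr bq.2)

/-- The action of a move. -/
def dact {A B P Q : Type} : DMove A B P Q → A ⊕ B :=
  Sum.elim (fun ap => Sum.inl ap.1) (fun bq => Sum.inr bq.1)

/-- The process acting at position `m` of a data word. -/
def procAt {A B P Q : Type} (d : Word (DMove A B P Q)) (m : ℕ) : Option (P ⊕ Q) :=
  (d m).map dproc

/-- The action taken at position `m` of a data word. -/
def actAt {A B P Q : Type} (d : Word (DMove A B P Q)) (m : ℕ) : Option (A ⊕ B) :=
  (d m).map dact

/-- Elements of the structure associated with a data word: one process element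
for every process, and one element for every position. -/
abbrev Elem (P Q : Type) : Type := (P ⊕ Q) ⊕ ℕ

/-- The `∼`-class (i.e. the process) of an element of a data word. -/
def classOfE {A B P Q : Type} (d : Word (DMove A B P Q)) : Elem P Q → Option (P ⊕ Q)
  | .inl q => some q
  | .inr m => procAt d m

/-! ### Prefix first-order logic on data words

`PDW A B p b x` : formulas in a context with `p` process variables, `b` bounding
variables and `x` prefix variables.  Sentences (possibly with constants, constants
being modelled as the initial free variables) are obtained by instantiating the
contexts. -/

/-- A variable of any of the three kinds. -/
abbrev DVar (p b x : ℕ) : Type := Fin p ⊕ (Fin b ⊕ Fin x)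

inductive PDW (A B : Type) : ℕ → ℕ → ℕ → Type where
  | eq {p b x} : DVar p b x → DVar p b x → PDW A B p b x
  | procS {p b x} : Fin p → PDW A B p b x
  | procE {p b x} : Fin p → PDW A B p b x
  | letter {p b x} : (A ⊕ B) → (Fin b ⊕ Fin x) → PDW A B p b x
  | lesim {p b x} : Fin x → Fin x → PDW A B p b x
  | sim {p b x} : Fin p → DVar p b x → PDW A B p b x
  | and {p b x} : PDW A B p b x → PDW A B p b x → PDW A B p b x
  | not {p b x} : PDW A B p b x → PDW A B p b x
  | exP {p b x} : PDW A B (p + 1) b x → PDW A B p b x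
  | exB {p b x} : PDW A B p (b + 1) x → PDW A B p b x
  | exX {p b x} : Fin b → PDW A B p b (x + 1) → PDW A B p b x

/-- Quantifier depth. -/
def PDW.depth {A B : Type} : {p b x : ℕ} → PDW A B p b x → ℕ
  | _, _, _, .eq _ _ => 0
  | _, _, _, .procS _ => 0
  | _, _, _, .procE _ => 0
  | _, _, _, .letter _ _ => 0
  | _, _, _, .lesim _ _ => 0
  | _, _, _, .sim _ _ => 0
  | _, _, _, .and φ ψ => max φ.depth ψ.depth
  | _, _, _, .not φ => φ.depth
  | _, _, _, .exP φ => φ.depth + 1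
  | _, _, _, .exB φ => φ.depth + 1
  | _, _, _, .exX _ φ => φ.depth + 1

/-- Interpretation of a variable as an element of the data-word structure. -/
def interpDVar {P Q : Type} {p b x : ℕ} (ρP : Fin p → P ⊕ Q) (ρB : Fin b → ℕ)
    (ρX : Fin x → ℕ) : DVar p b x → Elem P Q
  | .inl i => Sum.inl (ρP i)
  | .inr (.inl i) => Sum.inr (ρB i)
  | .inr (.inr i) => Sum.inr (ρX i)

/-- Satisfaction of a prefFO^dw formula in a data word, under assignments of the
process, bounding and prefix variables.  New bounding variables must be positions
lying in a fresh class (w.r.t. all present bounding variables), new prefix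
variables must be `≲` their associated bounding variable. -/
def PDW.Sat {A B P Q : Type} (d : Word (DMove A B P Q)) :
    {p b x : ℕ} → PDW A B p b x → (Fin p → P ⊕ Q) → (Fin b → ℕ) → (Fin x → ℕ) → Prop
  | _, _, _, .eq v w, ρP, ρB, ρX => interpDVar ρP ρB ρX v = interpDVar ρP ρB ρX w
  | _, _, _, .procS i, ρP, _, _ => ∃ q : P, ρP i = Sum.inl q
  | _, _, _, .procE i, ρP, _, _ => ∃ q : Q, ρP i = Sum.inr q
  | _, _, _, .letter a v, _, ρB, ρX => actAt d (Sum.elim ρB ρX v) = some a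
  | _, _, _, .lesim i j, _, _, ρX =>
      ρX i < ρX j ∧ ∃ q, procAt d (ρX i) = some q ∧ procAt d (ρX j) = some q
  | _, _, _, .sim i v, ρP, ρB, ρX => classOfE d (interpDVar ρP ρB ρX v) = some (ρP i)
  | _, _, _, .and φ ψ, ρP, ρB, ρX => PDW.Sat d φ ρP ρB ρX ∧ PDW.Sat d ψ ρP ρB ρX
  | _, _, _, .not φ, ρP, ρB, ρX => ¬ PDW.Sat d φ ρP ρB ρX
  | _, _, _, .exP φ, ρP, ρB, ρX => ∃ q : P ⊕ Q, PDW.Sat d φ (Fin.snoc ρP q) ρB ρX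
  | _, _, _, .exB φ, ρP, ρB, ρX => ∃ m : ℕ, d m ≠ none ∧
      (∀ j, procAt d m ≠ procAt d (ρB j)) ∧ PDW.Sat d φ ρP (Fin.snoc ρB m) ρX
  | _, _, _, .exX y φ, ρP, ρB, ρX => ∃ m : ℕ, d m ≠ none ∧ m < ρB y ∧
      procAt d m = procAt d (ρB y) ∧ PDW.Sat d φ ρP ρB (Fin.snoc ρX m)

/-- Satisfaction of a prefFO^dw sentence (no constants) in a data word. -/
def SatS {A B P Q : Type} (d : Word (DMove A B P Q)) (φ : PDW A B 0 0 0) : Prop :=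
  PDW.Sat d φ Fin.elim0 Fin.elim0 Fin.elim0

/-! ### Classes of a data word -/

/-- `m` is a position of process `q` in the data word `d`. -/
def isPosOf {A B P Q : Type} (d : Word (DMove A B P Q)) (q : P ⊕ Q) (m : ℕ) : Prop :=
  procAt d m = some q

open Classical in
/-- The class of process `q` in the data word `d`, as a (finite or infinite) word
over `A ⊕ B`: its `i`-th letter is the action taken at the `i`-th position of `q`. -/
noncomputable def classWord {A B P Q : Type} (d : Word (DMove A B P Q)) (q : P ⊕ Q) :
    Word (A ⊕ B) :=
  fun i =>
    if {m | isPosOf d q m}.Infinite ∨ i < Set.ncard {m | isPosOf d q m}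
    then actAt d (Nat.nth (isPosOf d q) i) else none

/-- The set of processes of `d` whose class has prefFO `k`-type `τ`. -/
def classesOfType {A B P Q : Type} (d : Word (DMove A B P Q)) (k : ℕ)
    (τ : Set (PSen (A ⊕ B))) : Set (P ⊕ Q) :=
  {q | tp k (classWord d q) = τ}

end PrefSynth
/-! ### The prefix Ehrenfeucht–Fraïssé game on data words (with constants) -/

namespace PrefSynth

/-- A pebble placed on a data word: a process pebble, a bounding pebble
or a prefix pebble. -/
inductive Peb (P Q : Type) : Type where
  | proc : P ⊕ Q → Peb P Q
  | bound : ℕ → Peb P Q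
  | pref : ℕ → Peb P Q

/-- The element on which a pebble is placed. -/
def Peb.elem {P Q : Type} : Peb P Q → Elem P Q
  | .proc q => Sum.inl q
  | .bound m => Sum.inr m
  | .pref m => Sum.inr m

/-- `e` is a System process element. -/
def IsProcSE {P Q : Type} (e : Elem P Q) : Prop := ∃ q : P, e = Sum.inl (Sum.inl q)

/-- `e` is an Environment process element. -/
def IsProcEE {P Q : Type} (e : Elem P Q) : Prop := ∃ q : Q, e = Sum.inl (Sum.inr q)

/-- `e` is a position labelled by the letter `a`. -/
def LetterIsE {A B P Q : Type} (d : Word (DMove A B P Q)) (e : Elem P Q) (a : A ⊕ B) :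
    Prop := ∃ m : ℕ, e = Sum.inr m ∧ actAt d m = some a

/-- `e ∼ f` in the data word `d`. -/
def SimE {A B P Q : Type} (d : Word (DMove A B P Q)) (e f : Elem P Q) : Prop :=
  ∃ q, classOfE d e = some q ∧ classOfE d f = some q

/-- `e ≲ f` in the data word `d`. -/
def LesimE {A B P Q : Type} (d : Word (DMove A B P Q)) (e f : Elem P Q) : Prop :=
  ∃ m m' : ℕ, e = Sum.inr m ∧ f = Sum.inr m' ∧ m < m' ∧ SimE d e f

/-- Agreement of a correspondence between elements of two data words: it must
preserve equality, `Proc_S`, `Proc_E`, the letters, `≲` and `∼`. -/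
def AgreeDW {A B P Q P' Q' : Type} (d : Word (DMove A B P Q))
    (d' : Word (DMove A B P' Q')) (E : List (Elem P Q × Elem P' Q')) : Prop :=
  ∀ e ∈ E, ∀ f ∈ E,
    ((e.1 = f.1) ↔ (e.2 = f.2)) ∧
    (IsProcSE e.1 ↔ IsProcSE e.2) ∧
    (IsProcEE e.1 ↔ IsProcEE e.2) ∧
    (∀ a : A ⊕ B, LetterIsE d e.1 a ↔ LetterIsE d' e.2 a) ∧
    (LesimE d e.1 f.1 ↔ LesimE d' e.2 f.2) ∧
    (SimE d e.1 f.1 ↔ SimE d' e.2 f.2)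

/-- A legal bounding move: a position whose class contains no previously placed
bounding pebble (from `l`) and no bounding constant (from `B0`). -/
def LegalBound {A B P Q : Type} (d : Word (DMove A B P Q)) (B0 : List ℕ)
    (l : List (Peb P Q)) (m : ℕ) : Prop :=
  d m ≠ none ∧ (∀ m₀ : ℕ, Peb.bound m₀ ∈ l → procAt d m ≠ procAt d m₀) ∧
    (∀ m₀ ∈ B0, procAt d m ≠ procAt d m₀)

/-- A legal prefix move: a position such that some previously placed bounding
pebble or bounding constant lies in the same class, at a later position. -/
def LegalPref {A B P Q : Type} (d : Word (DMove A B P Q)) (B0 : List ℕ)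
    (l : List (Peb P Q)) (m : ℕ) : Prop :=
  d m ≠ none ∧
    ∃ m₀ : ℕ, (Peb.bound m₀ ∈ l ∨ m₀ ∈ B0) ∧ m < m₀ ∧ procAt d m = procAt d m₀

/-- The matched pairs of elements determined by the constants `E0` and the
pebbles `L`. -/
def pairElems {P Q P' Q' : Type} (E0 : List (Elem P Q × Elem P' Q'))
    (L : List (Peb P Q × Peb P' Q')) : List (Elem P Q × Elem P' Q') :=
  E0 ++ L.map (fun pq => (pq.1.elem, pq.2.elem))

/-- `DupWinDW d d' E0 B0 B0' r L`: Duplicator wins the `r`-round prefix EF game on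
the data words `d` and `d'` with matched constant elements `E0` (the bounding
constants being interpreted by `B0` in `d` and by `B0'` in `d'`) and already
placed matched pebbles `L`. -/
def DupWinDW {A B P Q P' Q' : Type} (d : Word (DMove A B P Q))
    (d' : Word (DMove A B P' Q')) (E0 : List (Elem P Q × Elem P' Q'))
    (B0 B0' : List ℕ) : ℕ → List (Peb P Q × Peb P' Q') → Prop
  | 0, L => AgreeDW d d' (pairElems E0 L)
  | r + 1, L => AgreeDW d d' (pairElems E0 L) ∧
      (∀ q : P ⊕ Q, ∃ q' : P' ⊕ Q',
        DupWinDW d d' E0 B0 B0' r ((Peb.proc q, Peb.proc q') :: L)) ∧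
      (∀ q' : P' ⊕ Q', ∃ q : P ⊕ Q,
        DupWinDW d d' E0 B0 B0' r ((Peb.proc q, Peb.proc q') :: L)) ∧
      (∀ m : ℕ, LegalBound d B0 (L.map Prod.fst) m →
        ∃ m' : ℕ, LegalBound d' B0' (L.map Prod.snd) m' ∧
          DupWinDW d d' E0 B0 B0' r ((Peb.bound m, Peb.bound m') :: L)) ∧
      (∀ m' : ℕ, LegalBound d' B0' (L.map Prod.snd) m' →
        ∃ m : ℕ, LegalBound d B0 (L.map Prod.fst) m ∧
          DupWinDW d d' E0 B0 B0' r ((Peb.bound m, Peb.bound m') :: L)) ∧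
      (∀ m : ℕ, LegalPref d B0 (L.map Prod.fst) m →
        ∃ m' : ℕ, LegalPref d' B0' (L.map Prod.snd) m' ∧
          DupWinDW d d' E0 B0 B0' r ((Peb.pref m, Peb.pref m') :: L)) ∧
      (∀ m' : ℕ, LegalPref d' B0' (L.map Prod.snd) m' →
        ∃ m : ℕ, LegalPref d B0 (L.map Prod.fst) m ∧
          DupWinDW d d' E0 B0 B0' r ((Peb.pref m, Peb.pref m') :: L))

/-- The constants of a data word: interpretations of `cp` process constants,
`cb` bounding constants and `cx` prefix constants.  Validity: bounding and
prefix constants are positions, no two bounding constants share a class, and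
each prefix constant is `≲` some bounding constant. -/
def ValidConsts {A B P Q : Type} {cp cb cx : ℕ} (d : Word (DMove A B P Q))
    (γP : Fin cp → P ⊕ Q) (γB : Fin cb → ℕ) (γX : Fin cx → ℕ) : Prop :=
  (∀ j, d (γB j) ≠ none) ∧ (∀ j, d (γX j) ≠ none) ∧
  (∀ i j, i ≠ j → procAt d (γB i) ≠ procAt d (γB j)) ∧
  (∀ i, ∃ j, γX i < γB j ∧ procAt d (γX i) = procAt d (γB j))

/-- The matched constant elements determined by two interpretations of the same
constant symbols. -/
def constPairs {P Q P' Q' : Type} {cp cb cx : ℕ}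
    (γP : Fin cp → P ⊕ Q) (γB : Fin cb → ℕ) (γX : Fin cx → ℕ)
    (γP' : Fin cp → P' ⊕ Q') (γB' : Fin cb → ℕ) (γX' : Fin cx → ℕ) :
    List (Elem P Q × Elem P' Q') :=
  (List.ofFn fun i : Fin cp =>
    ((Sum.inl (γP i) : Elem P Q), (Sum.inl (γP' i) : Elem P' Q'))) ++
  (List.ofFn fun i : Fin cb =>
    ((Sum.inr (γB i) : Elem P Q), (Sum.inr (γB' i) : Elem P' Q'))) ++
  (List.ofFn fun i : Fin cx =>
    ((Sum.inr (γX i) : Elem P Q), (Sum.inr (γX' i) : Elem P' Q')))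

/-! ### The standard synthesis game -/

/-- A System strategy in the standard synthesis game: given the finite data word
played so far, output a System action and process, or pass (`none` plays the
role of `ε`). -/
abbrev Strat (A B P Q : Type) : Type := List (DMove A B P Q) → Option (A × P)

/-- The list of the first `n` moves of a data word. -/
def histList {M : Type} (d : Word M) (n : ℕ) : List M := (List.range n).filterMap d

/-- The data word `d` is compatible with the System strategy `σ`. -/
def CompatibleStd {A B P Q : Type} (σ : Strat A B P Q) (d : Word (DMove A B P Q)) :
    Prop :=
  ∀ i a p, d i = some (Sum.inl (a, p)) → σ (histList d i) = some (a, p)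

/-- The data word `d` is fair with respect to `σ`: either it is finite and `σ`
passes after it, or (being infinite) if `σ` wants to play infinitely often then
System actions occur infinitely often. -/
def FairStd {A B P Q : Type} (σ : Strat A B P Q) (d : Word (DMove A B P Q)) : Prop :=
  (∃ n, d n = none ∧ (∀ i, i < n → d i ≠ none) ∧ σ (histList d n) = none) ∨
  ((∀ n, d n ≠ none) ∧
    ((∀ N, ∃ i, N ≤ i ∧ σ (histList d (i + 1)) ≠ none) →
     (∀ N, ∃ i, N ≤ i ∧ ∃ a p, d i = some (Sum.inl (a, p)))))

/-- `σ` is winning for `φ` in the standard synthesis game: every compatible and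
fair data word satisfies `φ`. -/
def WinningStd {A B P Q : Type} (φ : PDW A B 0 0 0) (σ : Strat A B P Q) : Prop :=
  ∀ d : Word (DMove A B P Q), Word.Closed d → CompatibleStd σ d → FairStd σ d →
    SatS d φ

/-- System has an `(nS, nE)`-winning strategy for `φ` in the standard synthesis
game: a winning strategy whenever `|P_S| = nS` and `|P_E| = nE`. -/
def SystemWinsStd (A B : Type) (φ : PDW A B 0 0 0) (nS nE : ℕ) : Prop :=
  ∀ (P Q : Type), Finite P → Finite Q → Nat.card P = nS → Nat.card Q = nE →
    ∃ σ : Strat A B P Q, WinningStd φ σ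

/-! ### The symmetric game -/

/-- A System strategy in the symmetric game: may answer by any finite sequence
of System moves (`[]` playing the role of `ε`). -/
abbrev SymStrat (A B P Q : Type) : Type := List (DMove A B P Q) → List (A × P)

/-- The history after `n` rounds of the symmetric game, the Environment playing
the finite blocks `env 0, env 1, …` and System answering according to `σ`,
with strict alternation, Environment first. -/
def symHist {A B P Q : Type} (σ : SymStrat A B P Q) (env : ℕ → List (B × Q)) :
    ℕ → List (DMove A B P Q)
  | 0 => []
  | n + 1 =>
      let h := symHist σ env n ++ (env n).map Sum.inr
      h ++ (σ h).map Sum.inl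

/-- The data word `d` is compatible with the symmetric strategy `σ`: it is the
limit of the histories of an alternating play in which System follows `σ`. -/
def CompatibleSym {A B P Q : Type} (σ : SymStrat A B P Q)
    (d : Word (DMove A B P Q)) : Prop :=
  ∃ env : ℕ → List (B × Q),
    (∀ n i x, (symHist σ env n)[i]? = some x → d i = some x) ∧
    (∀ i, d i ≠ none → ∃ n, i < (symHist σ env n).length)

/-- Fairness in the symmetric game: if `d` is finite then `σ` passes after it. -/
def FairSym {A B P Q : Type} (σ : SymStrat A B P Q) (d : Word (DMove A B P Q)) :
    Prop :=
  ∀ n, d n = none → (∀ i, i < n → d i ≠ none) → σ (histList d n) = []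

/-- `σ` is winning for `φ` in the symmetric game. -/
def WinningSym {A B P Q : Type} (φ : PDW A B 0 0 0) (σ : SymStrat A B P Q) : Prop :=
  ∀ d : Word (DMove A B P Q), Word.Closed d → CompatibleSym σ d → FairSym σ d →
    SatS d φ

/-- System has an `(nS, nE)`-winning strategy for `φ` in the symmetric game. -/
def SystemWinsSym (A B : Type) (φ : PDW A B 0 0 0) (nS nE : ℕ) : Prop :=
  ∀ (P Q : Type), Finite P → Finite Q → Nat.card P = nS → Nat.card Q = nE →
    ∃ σ : SymStrat A B P Q, WinningSym φ σ

/-! ### The token game on types -/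

/-- A node of the arena: a prefFO `k`-type of finite words. -/
abbrev Typ (A : Type) (k : ℕ) : Type := {T : Set (PSen A) // T ∈ WTypes A k}

/-- The initial node: the type of the empty word. -/
def initTyp (A : Type) (k : ℕ) : Typ A k :=
  ⟨tp k (Word.ofList ([] : List A)), ⟨[], rfl⟩⟩

/-- The transition relation of the arena. -/
def typLe {A : Type} {k : ℕ} (τ τ' : Typ A k) : Prop := typeLe k τ.1 τ'.1

/-- A configuration: the position of each token in the arena.  `TS` and `TE` are
the sets of System and Environment tokens. -/
abbrev Conf (A : Type) (k : ℕ) (TS TE : Type) : Type := (TS ⊕ TE) → Typ A k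

/-- A System strategy in the token game: given the sequence of configurations
so far, where to move each System token. -/
abbrev TokStrat (A : Type) (k : ℕ) (TS TE : Type) : Type :=
  List (Conf A k TS TE) → TS → Typ A k

/-- A play of the token game: all tokens start on the initial node, tokens only
move along `⪯`, and the players strictly alternate, Environment first (at even
stages Environment moves, so System tokens stay put; at odd stages System moves). -/
def IsPlay {A : Type} {k : ℕ} {TS TE : Type} (conf : ℕ → Conf A k TS TE) : Prop :=
  (∀ t, conf 0 t = initTyp A k) ∧
  (∀ n t, typLe (conf n t) (conf (n + 1) t)) ∧
  (∀ n, Even n → ∀ t : TS, conf (n + 1) (Sum.inl t) = conf n (Sum.inl t)) ∧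
  (∀ n, ¬ Even n → ∀ t : TE, conf (n + 1) (Sum.inr t) = conf n (Sum.inr t))

/-- The play `conf` is compatible with the System strategy `σ`. -/
def CompatibleTok {A : Type} {k : ℕ} {TS TE : Type} (σ : TokStrat A k TS TE)
    (conf : ℕ → Conf A k TS TE) : Prop :=
  ∀ n, ¬ Even n → ∀ t : TS,
    conf (n + 1) (Sum.inl t) = σ (List.ofFn (fun i : Fin (n + 1) => conf i)) t

/-- The strategy `σ` only suggests legal moves (along `⪯`). -/
def StratLegal {A : Type} {k : ℕ} {TS TE : Type} (σ : TokStrat A k TS TE) : Prop :=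
  ∀ (h : List (Conf A k TS TE)) (hne : h ≠ []) (t : TS),
    typLe (h.getLast hne (Sum.inl t)) (σ h t)

/-- A configuration matches a `k`-counting function `c` (values `≥ k`
representing `k+`): the number of tokens on each type `τ` is exactly `c τ` when
`c τ < k`, and at least `k` otherwise. -/
def CfgMatches {A : Type} {k : ℕ} {TS TE : Type} (c : Typ A k → ℕ)
    (cfg : Conf A k TS TE) : Prop :=
  ∀ τ : Typ A k,
    (c τ < k → Nat.card {t : TS ⊕ TE // cfg t = τ} = c τ) ∧
    (¬ c τ < k → k ≤ Nat.card {t : TS ⊕ TE // cfg t = τ})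

/-- The acceptance set `Acc_φ`: the `k`-counting functions `c` such that every
data word whose numbers of classes of each prefFO `k`-type match `c` satisfies
`φ`. -/
def AccC (A B : Type) (k : ℕ) (φ : PDW A B 0 0 0) (c : Typ (A ⊕ B) k → ℕ) : Prop :=
  (∀ τ, c τ ≤ k) ∧
  ∀ (P Q : Type) (d : Word (DMove A B P Q)), Word.Closed d →
    (∀ τ : Typ (A ⊕ B) k,
      (c τ < k → Cardinal.mk ↥(classesOfType d k τ.1) = (c τ : Cardinal)) ∧
      (¬ c τ < k → (k : Cardinal) ≤ Cardinal.mk ↥(classesOfType d k τ.1))) →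
    SatS d φ

/-- The strategy `σ` is winning in the token game for `φ`: every compatible
maximal play stabilizes in a limit configuration satisfying the acceptance
condition. -/
def TokWinning {A B : Type} {k : ℕ} {TS TE : Type} (φ : PDW A B 0 0 0)
    (σ : TokStrat (A ⊕ B) k TS TE) : Prop :=
  ∀ conf : ℕ → Conf (A ⊕ B) k TS TE, IsPlay conf → CompatibleTok σ conf →
    ∃ N, (∀ n, N ≤ n → conf n = conf N) ∧
      ∃ c : Typ (A ⊕ B) k → ℕ, AccC A B k φ c ∧ CfgMatches c (conf N)

/-- The pair `(nS, nE)` is winning for System in the token game for `φ` (of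
depth `k`). -/
def SystemWinsTok (A B : Type) (k : ℕ) (φ : PDW A B 0 0 0) (nS nE : ℕ) : Prop :=
  ∀ (TS TE : Type), Finite TS → Finite TE → Nat.card TS = nS → Nat.card TE = nE →
    ∃ σ : TokStrat (A ⊕ B) k TS TE, StratLegal σ ∧ TokWinning φ σ

/-! ### An explicit encoding of prefFO^dw sentences, for decidability -/

/-- Encoding of a variable. -/
def encodeDVar {p b x : ℕ} : DVar p b x → ℕ
  | .inl i => Nat.pair 0 i.1
  | .inr (.inl i) => Nat.pair 1 i.1
  | .inr (.inr i) => Nat.pair 2 i.1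

/-- An explicit injective encoding of prefFO^dw formulas over the alphabets
`Fin m` and `Fin n` into the natural numbers. -/
def encodePDW {m n : ℕ} : {p b x : ℕ} → PDW (Fin m) (Fin n) p b x → ℕ
  | _, _, _, .eq v w => Nat.pair 0 (Nat.pair (encodeDVar v) (encodeDVar w))
  | _, _, _, .procS i => Nat.pair 1 i.1
  | _, _, _, .procE i => Nat.pair 2 i.1
  | _, _, _, .letter a v =>
      Nat.pair 3 (Nat.pair
        (Sum.elim (fun i => Nat.pair 0 i.1) (fun j => Nat.pair 1 j.1) a)
        (Sum.elim (fun i => Nat.pair 0 i.1) (fun j => Nat.pair 1 j.1) v))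
  | _, _, _, .lesim i j => Nat.pair 4 (Nat.pair i.1 j.1)
  | _, _, _, .sim i v => Nat.pair 5 (Nat.pair i.1 (encodeDVar v))
  | _, _, _, .and φ ψ => Nat.pair 6 (Nat.pair (encodePDW φ) (encodePDW ψ))
  | _, _, _, .not φ => Nat.pair 7 (encodePDW φ)
  | _, _, _, .exP φ => Nat.pair 8 (encodePDW φ)
  | _, _, _, .exB φ => Nat.pair 9 (encodePDW φ)
  | _, _, _, .exX y φ => Nat.pair 10 (Nat.pair y.1 (encodePDW φ))

end PrefSynth

namespace PrefSynth

/-! Satisfaction of a prefFO formula only looks at positions below its bounding variable, so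
`∃ x̄. φ` holds in a word iff it holds in all sufficiently long prefixes. Every sentence is a
boolean combination of such, so its truth value in `w[0…N]` eventually equals its truth value in
`w`; when the types of the prefixes are eventually constant, that constant is therefore the type
of `w`. -/

open Filter

section

variable {A : Type}

lemma Word.take_apply_of_lt (w : Word A) {N i : ℕ} (h : i < N) : w.take N i = w i :=
  if_pos h

lemma Word.pos_take_iff (w : Word A) (N m : ℕ) : (w.take N).pos m ↔ m < N ∧ w.pos m := by
  by_cases h : m < N <;> simp [Word.pos, Word.take, h]

lemma PFm.sat_take_iff (w : Word A) (N : ℕ) {n : ℕ} (φ : PFm A n) (ρ : Fin n → ℕ)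
    (hρ : ∀ j, ρ j < N) : PFm.Sat (w.take N) φ ρ ↔ PFm.Sat w φ ρ := by
  induction φ with
  | eq | lt => rfl
  | letter a i => simp only [PFm.Sat, w.take_apply_of_lt (hρ i)]
  | and φ ψ ihφ ihψ => exact and_congr (ihφ ρ hρ) (ihψ ρ hρ)
  | not φ ih => exact not_congr (ih ρ hρ)
  | exlt φ ih =>
    have hsnoc : ∀ m < ρ 0, ∀ j, (Fin.snoc ρ m : Fin _ → ℕ) j < N := fun m hm =>
      Fin.lastCases (by simpa using hm.trans (hρ 0)) (by simpa using hρ)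
    refine exists_congr fun m => ⟨?_, ?_⟩
    · rintro ⟨hpos, hm, hsat⟩
      exact ⟨((w.pos_take_iff N m).1 hpos).2, hm, (ih _ (hsnoc m hm)).1 hsat⟩
    · rintro ⟨hpos, hm, hsat⟩
      exact ⟨(w.pos_take_iff N m).2 ⟨hm.trans (hρ 0), hpos⟩, hm, (ih _ (hsnoc m hm)).2 hsat⟩

lemma PSen.sat_take_exB_iff (w : Word A) (N : ℕ) (φ : PFm A 1) :
    PSen.Sat (w.take N) (.exB φ) ↔ ∃ m < N, w.pos m ∧ PFm.Sat w φ (fun _ => m) := by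
  refine exists_congr fun m => ?_
  rw [w.pos_take_iff, and_assoc]
  exact and_congr_right fun hm =>
    and_congr_right fun _ => PFm.sat_take_iff w N φ _ fun _ => hm

lemma PSen.eventually_sat_take_iff (w : Word A) (s : PSen A) :
    ∀ᶠ N in atTop, (PSen.Sat (w.take N) s ↔ PSen.Sat w s) := by
  induction s with
  | exB φ =>
    by_cases h : PSen.Sat w (.exB φ)
    · obtain ⟨m, hpos, hφ⟩ := h
      filter_upwards [eventually_gt_atTop m] with N hN
      exact iff_of_true ((sat_take_exB_iff w N φ).2 ⟨m, hN, hpos, hφ⟩) ⟨m, hpos, hφ⟩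
    · refine Eventually.of_forall fun N => iff_of_false ?_ h
      intro hN
      obtain ⟨m, -, hpos, hφ⟩ := (sat_take_exB_iff w N φ).1 hN
      exact h ⟨m, hpos, hφ⟩
  | and s t ihs iht =>
    filter_upwards [ihs, iht] with N hs ht
    exact and_congr hs ht
  | not s ih =>
    filter_upwards [ih] with N hs
    exact not_congr hs

lemma tp_eq_of_eventually_tp_take_eq (k : ℕ) (w : Word A) (τ : Set (PSen A))
    (h : ∀ᶠ N in atTop, tp k (w.take N) = τ) : tp k w = τ := by
  ext s
  obtain ⟨N, hsat, hτ⟩ := ((PSen.eventually_sat_take_iff w s).and h).exists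
  rw [← hτ]
  exact and_congr_right fun _ => hsat.symm

end

theorem tp_eq_stationary_type_general {A : Type} (k : ℕ) (u : ℕ → A)
    (τ : Set (PSen A))
    (hstat : ∃ n : ℕ, ∀ m : ℕ, n ≤ m → tp k (Word.take (Word.ofFun u) (m + 1)) = τ) :
    tp k (Word.ofFun u) = τ := by
  obtain ⟨n, hn⟩ := hstat
  refine tp_eq_of_eventually_tp_take_eq k _ τ ?_
  filter_upwards [eventually_ge_atTop (n + 1)] with N hN
  obtain ⟨m, rfl⟩ : ∃ m, N = m + 1 := ⟨N - 1, by omega⟩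
  exact hn m (by omega)

/-- If the infinite word `u` has stationary type `τ ∈ Types_k`,
then `tp_k(u) = τ`. -/
theorem tp_eq_stationary_type {A : Type} [Finite A] (k : ℕ) (u : ℕ → A)
    (τ : Set (PSen A)) (hτ : τ ∈ WTypes A k)
    (hstat : ∃ n : ℕ, ∀ m : ℕ, n ≤ m → tp k (Word.take (Word.ofFun u) (m + 1)) = τ) :
    tp k (Word.ofFun u) = τ :=
  tp_eq_stationary_type_general k u τ hstat

end PrefSynth
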